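/- Fix 0 < K⁻ ≤ K⁺ and δ ∈ [−1,1], and set K := √(K⁺/K⁻). For u ∈ ℝ define V⁺(u) := u/√(u²+4), V⁻(u) := Ku/√(K²u²+4), r(u) := √(K²u²+4)/(K√(u²+4)), p⁺(u) := (1/2)(1 + r(u))(1 + δ·V⁻(u))/(1 + δ·V⁺(u)) and p⁻(u) := (1/2)(1 − r(u))(1 − δ·V⁻(u))/(1 + δ·V⁺(u)). Then p⁺(u) ≥ 0, p⁻(u) ≥ 0 and p⁺(u) + p⁻(u) = 1 for all u ∈ ℝ, and for every bounded measurable function f : ℝ → ℝ one has ∫_ℝ (p⁺(u)·f(Ku) + p⁻(u)·f(−Ku)) dÑ(K⁺,δ)(u) = ∫_ℝ f(u) dÑ(K⁻,δ)(u). In particular, there exist random variables U⁺ ~ Ñ(K⁺,δ) and U⁻ ~ Ñ(K⁻,δ) on a common probability space with U⁻ ∈ {KU⁺, −KU⁺} almost surely, so that K⁻(U⁻)² = K⁺(U⁺)² almost surely. -/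

import Mathlib

open MeasureTheory

/-- The density of the tilted Gaussian law Ñ(K,δ). -/
noncomputable def tiltDensity (K δ u : ℝ) : ℝ :=
  Real.sqrt (K / (2 * Real.pi)) * Real.exp (-(K * u ^ 2 / 2)) *
    (1 + δ * u / Real.sqrt (u ^ 2 + 4))

/-- The tilted Gaussian law Ñ(K,δ). -/
noncomputable def tiltedGaussian (K δ : ℝ) : Measure ℝ :=
  volume.withDensity fun u => ENNReal.ofReal (tiltDensity K δ u)

/-!
Write `ρ_K = φ_K (1 + δ V⁺)` for the density of `Ñ(K, δ)`, with `φ_K` the centred Gaussian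
density of variance `1/K`. Since `V⁻(u) = V⁺(K u)`, `φ_{K⁺}(u) = K φ_{K⁻}(K u)` when
`K² K⁻ = K⁺`, `r` is even and `V^±` are odd, one gets
`p⁺(u) ρ_{K⁺}(u) + p⁻(-u) ρ_{K⁺}(-u) = ½ ((1 + r) + (1 - r)) (1 + δ V⁻(u)) φ_{K⁺}(u)`,
which is `K ρ_{K⁻}(K u)`.
Substituting `u ↦ -u` in the `p⁻` term and then `x = K u` gives the integral identity, while
`p⁺ + p⁻ = 1` comes from `r V⁻ = V⁺`. The coupling draws `U⁺ ~ Ñ(K⁺, δ)` and an independent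
uniform `T` on `(0, 1]`, and sets `U⁻ = K U⁺` if `T ≤ p⁺(U⁺)` and `U⁻ = -K U⁺` otherwise; the
integral identity, applied to indicators, identifies the law of `U⁻`.
-/

lemma integral_eq_zero_of_odd {f : ℝ → ℝ} (hf : ∀ x, f (-x) = -f x) : ∫ x, f x = 0 := by
  have h := integral_neg_eq_self f volume
  simp_rw [hf, integral_neg] at h
  linarith

lemma norm_mul_le_of_mem_Icc {p y C : ℝ} (hp : p ∈ Set.Icc 0 1) (hy : |y| ≤ C) :
    ‖p * y‖ ≤ C := by
  rw [norm_mul, Real.norm_eq_abs, Real.norm_eq_abs, abs_of_nonneg hp.1]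
  exact (mul_le_of_le_one_left (abs_nonneg y) hp.2).trans hy

instance isProbabilityMeasure_volume_restrict_Ioc_zero_one :
    IsProbabilityMeasure (volume.restrict (Set.Ioc (0 : ℝ) 1)) :=
  ⟨by simp⟩

lemma setIntegral_Ioc_zero_one_ite_le {c : ℝ} (hc : c ∈ Set.Icc 0 1) (x y : ℝ) :
    ∫ t in Set.Ioc 0 1, (if t ≤ c then x else y) = c * x + (1 - c) * y := by
  have h : (fun t => if t ≤ c then x else y) =
      fun t => (Set.Iic c).indicator (fun _ => x - y) t + y := by
    ext t; by_cases ht : t ≤ c <;> simp [Set.indicator, ht]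
  rw [h, integral_add ((integrable_const _).indicator measurableSet_Iic) (integrable_const y),
    integral_indicator_const _ measurableSet_Iic, measureReal_restrict_apply measurableSet_Iic]
  simp [Set.Iic_inter_Ioc_of_le hc.2, hc.1]
  ring

namespace Coupling

variable {α β : Type*} {p : α → ℝ} {a b : α → β}

/-- With `ω.2` uniform on `(0, 1]`, this is `a ω.1` with probability `p ω.1` and `b ω.1`
otherwise. -/
noncomputable def randomChoice (p : α → ℝ) (a b : α → β) (ω : α × ℝ) : β :=
  if ω.2 ≤ p ω.1 then a ω.1 else b ω.1

lemma randomChoice_eq_or (ω : α × ℝ) :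
    randomChoice p a b ω = a ω.1 ∨ randomChoice p a b ω = b ω.1 := by
  unfold randomChoice; split_ifs <;> simp

variable [MeasurableSpace α] [MeasurableSpace β]

lemma measurable_randomChoice (hp : Measurable p) (ha : Measurable a) (hb : Measurable b) :
    Measurable (randomChoice p a b) :=
  Measurable.ite (measurableSet_le measurable_snd (hp.comp measurable_fst))
    (ha.comp measurable_fst) (hb.comp measurable_fst)

lemma integral_comp_randomChoice (μ : Measure α) [IsProbabilityMeasure μ] (hp : Measurable p)
    (hp01 : ∀ x, p x ∈ Set.Icc 0 1) (ha : Measurable a) (hb : Measurable b) {g : β → ℝ}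
    (hg : Measurable g) {C : ℝ} (hC : ∀ y, |g y| ≤ C) :
    ∫ ω, g (randomChoice p a b ω) ∂μ.prod (volume.restrict (Set.Ioc 0 1)) =
      ∫ x, (p x * g (a x) + (1 - p x) * g (b x)) ∂μ := by
  have hint : Integrable (fun ω => g (randomChoice p a b ω))
      (μ.prod (volume.restrict (Set.Ioc 0 1))) :=
    .of_bound (hg.comp (measurable_randomChoice hp ha hb)).aestronglyMeasurable C
      (ae_of_all _ fun ω => hC _)
  rw [integral_prod _ hint]
  congr with x
  simp only [randomChoice, apply_ite g]
  exact setIntegral_Ioc_zero_one_ite_le (hp01 x) _ _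

theorem map_randomChoice (μ : Measure α) [IsProbabilityMeasure μ] (hp : Measurable p)
    (hp01 : ∀ x, p x ∈ Set.Icc 0 1) (ha : Measurable a) (hb : Measurable b)
    (ν : Measure β) [IsFiniteMeasure ν]
    (hν : ∀ g : β → ℝ, Measurable g → (∃ C, ∀ y, |g y| ≤ C) →
      ∫ x, (p x * g (a x) + (1 - p x) * g (b x)) ∂μ = ∫ y, g y ∂ν) :
    (μ.prod (volume.restrict (Set.Ioc 0 1))).map (randomChoice p a b) = ν := by
  have hX := measurable_randomChoice hp ha hb
  ext s hs
  have hind : Measurable (s.indicator (1 : β → ℝ)) := measurable_const.indicator hs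
  have hbound : ∀ y, |s.indicator (1 : β → ℝ) y| ≤ 1 := fun y => by
    by_cases hy : y ∈ s <;> simp [hy]
  rw [← measureReal_eq_measureReal_iff, ← integral_indicator_one hs, ← integral_indicator_one hs,
    integral_map hX.aemeasurable hind.aestronglyMeasurable,
    integral_comp_randomChoice μ hp hp01 ha hb hind hbound, hν _ hind ⟨1, hbound⟩]

end Coupling

open Real

namespace TiltedGaussian

variable {K δ : ℝ}

noncomputable def gaussDensity (K u : ℝ) : ℝ := √(K / (2 * π)) * exp (-(K * u ^ 2 / 2))

/-- The paper's `V⁺`. -/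
noncomputable def tilt (u : ℝ) : ℝ := u / √(u ^ 2 + 4)

/-- The paper's `V⁻`. -/
noncomputable def scaledTilt (K u : ℝ) : ℝ := K * u / √(K ^ 2 * u ^ 2 + 4)

/-- The paper's `r`. -/
noncomputable def tiltRatio (K u : ℝ) : ℝ := √(K ^ 2 * u ^ 2 + 4) / (K * √(u ^ 2 + 4))

noncomputable def probPlus (K δ u : ℝ) : ℝ :=
  (1 / 2) * (1 + tiltRatio K u) * (1 + δ * scaledTilt K u) / (1 + δ * tilt u)

noncomputable def probMinus (K δ u : ℝ) : ℝ :=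
  (1 / 2) * (1 - tiltRatio K u) * (1 - δ * scaledTilt K u) / (1 + δ * tilt u)

lemma sqrt_sq_add_four_pos (u : ℝ) : 0 < √(u ^ 2 + 4) := by positivity

lemma scaledTilt_eq (K u : ℝ) : scaledTilt K u = tilt (K * u) := by
  rw [scaledTilt, tilt, mul_pow]

lemma tilt_neg (u : ℝ) : tilt (-u) = -tilt u := by
  rw [tilt, tilt, neg_sq, neg_div]

lemma tiltRatio_neg (K u : ℝ) : tiltRatio K (-u) = tiltRatio K u := by
  rw [tiltRatio, tiltRatio, neg_sq]

lemma gaussDensity_neg (K u : ℝ) : gaussDensity K (-u) = gaussDensity K u := by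
  rw [gaussDensity, gaussDensity, neg_sq]

lemma abs_tilt_lt_one (u : ℝ) : |tilt u| < 1 := by
  rw [tilt, abs_div, abs_of_pos (sqrt_sq_add_four_pos u), div_lt_one (sqrt_sq_add_four_pos u),
    ← sqrt_sq_eq_abs]
  exact sqrt_lt_sqrt (sq_nonneg u) (by linarith)

lemma abs_mul_tilt_lt_one (hδ : |δ| ≤ 1) (u : ℝ) : |δ * tilt u| < 1 := by
  rw [abs_mul]
  exact mul_lt_one_of_nonneg_of_lt_one_right hδ (abs_nonneg _) (abs_tilt_lt_one u)

lemma one_add_mul_tilt_pos (hδ : |δ| ≤ 1) (u : ℝ) : 0 < 1 + δ * tilt u := by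
  linarith [neg_abs_le (δ * tilt u), abs_mul_tilt_lt_one hδ u]

lemma tiltRatio_nonneg (hK : 0 ≤ K) (u : ℝ) : 0 ≤ tiltRatio K u := by
  unfold tiltRatio; positivity

lemma tiltRatio_le_one (hK : 1 ≤ K) (u : ℝ) : tiltRatio K u ≤ 1 := by
  have hK0 : 0 ≤ K := zero_le_one.trans hK
  have h : K * √(u ^ 2 + 4) = √(K ^ 2 * (u ^ 2 + 4)) := by
    rw [sqrt_mul (sq_nonneg K), sqrt_sq hK0]
  rw [tiltRatio, h]
  exact div_le_one_of_le₀ (sqrt_le_sqrt (by nlinarith)) (sqrt_nonneg _)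

lemma tiltRatio_mul_scaledTilt (hK : 0 < K) (u : ℝ) :
    tiltRatio K u * scaledTilt K u = tilt u := by
  have := sqrt_sq_add_four_pos (K * u)
  rw [mul_pow] at this
  rw [tiltRatio, scaledTilt, tilt]
  field_simp

lemma probPlus_nonneg (hK : 0 ≤ K) (hδ : |δ| ≤ 1) (u : ℝ) : 0 ≤ probPlus K δ u := by
  have h := abs_mul_tilt_lt_one hδ (K * u)
  rw [← scaledTilt_eq] at h
  have := tiltRatio_nonneg hK u
  exact div_nonneg (by nlinarith [neg_abs_le (δ * scaledTilt K u)])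
    (one_add_mul_tilt_pos hδ u).le

lemma probMinus_nonneg (hK : 1 ≤ K) (hδ : |δ| ≤ 1) (u : ℝ) : 0 ≤ probMinus K δ u := by
  have h := abs_mul_tilt_lt_one hδ (K * u)
  rw [← scaledTilt_eq] at h
  have := tiltRatio_le_one hK u
  exact div_nonneg (by nlinarith [le_abs_self (δ * scaledTilt K u)])
    (one_add_mul_tilt_pos hδ u).le

lemma probPlus_add_probMinus (hK : 0 < K) (hδ : |δ| ≤ 1) (u : ℝ) :
    probPlus K δ u + probMinus K δ u = 1 := by
  rw [probPlus, probMinus, ← add_div, div_eq_one_iff_eq (one_add_mul_tilt_pos hδ u).ne']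
  linear_combination δ * tiltRatio_mul_scaledTilt hK u

lemma probPlus_le_one (hK : 1 ≤ K) (hδ : |δ| ≤ 1) (u : ℝ) : probPlus K δ u ≤ 1 := by
  linarith [probMinus_nonneg hK hδ u, probPlus_add_probMinus (zero_lt_one.trans_le hK) hδ u]

lemma probMinus_le_one (hK : 0 < K) (hδ : |δ| ≤ 1) (u : ℝ) : probMinus K δ u ≤ 1 := by
  linarith [probPlus_nonneg hK.le hδ u, probPlus_add_probMinus hK hδ u]

lemma tiltDensity_eq (K δ u : ℝ) : tiltDensity K δ u = gaussDensity K u * (1 + δ * tilt u) := by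
  rw [tiltDensity, gaussDensity, tilt, mul_div_assoc δ]

lemma gaussDensity_eq_mul (hK : 0 < K) {Km Kp : ℝ} (hKK : K ^ 2 * Km = Kp) (u : ℝ) :
    gaussDensity Kp u = K * gaussDensity Km (K * u) := by
  rw [gaussDensity, gaussDensity, ← hKK, mul_div_assoc, sqrt_mul (sq_nonneg K), sqrt_sq hK.le]
  ring_nf

lemma probPlus_mul_tiltDensity_add (hK : 0 < K) (hδ : |δ| ≤ 1) {Km Kp : ℝ}
    (hKK : K ^ 2 * Km = Kp) (u : ℝ) :
    probPlus K δ u * tiltDensity Kp δ u + probMinus K δ (-u) * tiltDensity Kp δ (-u) =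
      K * tiltDensity Km δ (K * u) := by
  have h₁ := (one_add_mul_tilt_pos hδ u).ne'
  have h₂ := (one_add_mul_tilt_pos hδ (-u)).ne'
  rw [probPlus, probMinus, tiltDensity_eq, tiltDensity_eq, tiltDensity_eq, tiltRatio_neg,
    scaledTilt_eq, scaledTilt_eq, mul_neg, tilt_neg, gaussDensity_neg, gaussDensity_eq_mul hK hKK]
  field_simp
  ring


@[fun_prop]
lemma continuous_tilt : Continuous tilt :=
  continuous_id.div (by fun_prop) fun u => (sqrt_sq_add_four_pos u).ne'

lemma integrable_gaussDensity (hK : 0 < K) : Integrable (gaussDensity K) := by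
  have h := (integrable_exp_neg_mul_sq (half_pos hK)).const_mul √(K / (2 * π))
  refine h.congr (ae_of_all _ fun u => ?_)
  simp only [gaussDensity]
  ring_nf

lemma integral_gaussDensity (hK : 0 < K) : ∫ u, gaussDensity K u = 1 := by
  have h : ∀ u, gaussDensity K u = √(K / (2 * π)) * exp (-(K / 2) * u ^ 2) := fun u => by
    rw [gaussDensity]; ring_nf
  simp_rw [h]
  rw [integral_const_mul, integral_gaussian, ← sqrt_mul (by positivity)]
  field_simp
  exact sqrt_one

lemma integrable_tiltDensity (hK : 0 < K) (hδ : |δ| ≤ 1) : Integrable (tiltDensity K δ) := by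
  have hb : ∀ u, ‖1 + δ * tilt u‖ ≤ 2 := fun u => by
    rw [norm_eq_abs]
    linarith [abs_add_le 1 (δ * tilt u), abs_mul_tilt_lt_one hδ u, abs_one (α := ℝ)]
  simp_rw [funext (tiltDensity_eq K δ)]
  exact (integrable_gaussDensity hK).mul_bdd (by fun_prop) (ae_of_all _ hb)

lemma integral_tiltDensity (hK : 0 < K) : ∫ u, tiltDensity K δ u = 1 := by
  have hodd : ∫ u, gaussDensity K u * tilt u = 0 :=
    integral_eq_zero_of_odd fun u => by rw [gaussDensity_neg, tilt_neg, mul_neg]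
  have hint : Integrable fun u => gaussDensity K u * tilt u :=
    (integrable_gaussDensity hK).mul_bdd continuous_tilt.aestronglyMeasurable
      (ae_of_all _ fun u => (abs_tilt_lt_one u).le)
  simp_rw [tiltDensity_eq, mul_add, mul_one, mul_left_comm _ δ]
  rw [integral_add (integrable_gaussDensity hK) (hint.const_mul δ), integral_const_mul, hodd,
    integral_gaussDensity hK, mul_zero, add_zero]

lemma tiltDensity_nonneg (hδ : |δ| ≤ 1) (K u : ℝ) : 0 ≤ tiltDensity K δ u := by
  rw [tiltDensity_eq]
  exact mul_nonneg (by unfold gaussDensity; positivity) (one_add_mul_tilt_pos hδ u).le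

lemma isProbabilityMeasure_tiltedGaussian (hK : 0 < K) (hδ : |δ| ≤ 1) :
    IsProbabilityMeasure (tiltedGaussian K δ) := by
  constructor
  rw [tiltedGaussian, withDensity_apply _ .univ, Measure.restrict_univ,
    ← ofReal_integral_eq_lintegral_ofReal (integrable_tiltDensity hK hδ)
      (ae_of_all _ (tiltDensity_nonneg hδ K)), integral_tiltDensity hK, ENNReal.ofReal_one]

lemma integral_tiltedGaussian (hδ : |δ| ≤ 1) (K : ℝ) (g : ℝ → ℝ) :
    ∫ u, g u ∂tiltedGaussian K δ = ∫ u, tiltDensity K δ u * g u := by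
  rw [tiltedGaussian, integral_withDensity_eq_integral_toReal_smul
    (by unfold tiltDensity; fun_prop)
    (ae_of_all _ fun _ => ENNReal.ofReal_lt_top)]
  simp_rw [ENNReal.toReal_ofReal (tiltDensity_nonneg hδ K _), smul_eq_mul]

@[fun_prop]
lemma measurable_probPlus (K δ : ℝ) : Measurable (probPlus K δ) := by
  unfold probPlus tiltRatio scaledTilt tilt; fun_prop

@[fun_prop]
lemma measurable_probMinus (K δ : ℝ) : Measurable (probMinus K δ) := by
  unfold probMinus tiltRatio scaledTilt tilt; fun_prop

theorem integral_probPlus_add_probMinus {Km Kp : ℝ} (hKm : 0 < Km) (hK : 1 ≤ K)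
    (hKK : K ^ 2 * Km = Kp) (hδ : |δ| ≤ 1) {f : ℝ → ℝ} (hf : Measurable f)
    (hfb : ∃ C, ∀ x, |f x| ≤ C) :
    ∫ u, (probPlus K δ u * f (K * u) + probMinus K δ u * f (-(K * u))) ∂tiltedGaussian Kp δ =
      ∫ u, f u ∂tiltedGaussian Km δ := by
  obtain ⟨C, hC⟩ := hfb
  have hK0 : 0 < K := zero_lt_one.trans_le hK
  have hKp : 0 < Kp := hKK ▸ by positivity
  have hplus : Integrable fun u => tiltDensity Kp δ u * (probPlus K δ u * f (K * u)) :=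
    (integrable_tiltDensity hKp hδ).mul_bdd (by fun_prop)
      (ae_of_all _ fun u => norm_mul_le_of_mem_Icc
        ⟨probPlus_nonneg hK0.le hδ u, probPlus_le_one hK hδ u⟩ (hC _))
  have hminus : Integrable fun u => tiltDensity Kp δ u * (probMinus K δ u * f (-(K * u))) :=
    (integrable_tiltDensity hKp hδ).mul_bdd (by fun_prop)
      (ae_of_all _ fun u => norm_mul_le_of_mem_Icc
        ⟨probMinus_nonneg hK hδ u, probMinus_le_one hK0 hδ u⟩ (hC _))
  have hbalance : ∀ u, tiltDensity Kp δ u * (probPlus K δ u * f (K * u)) +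
      tiltDensity Kp δ (-u) * (probMinus K δ (-u) * f (-(K * -u))) =
        K * (tiltDensity Km δ (K * u) * f (K * u)) := fun u => by
    rw [mul_neg, neg_neg]
    linear_combination f (K * u) * probPlus_mul_tiltDensity_add hK0 hδ hKK u
  rw [integral_tiltedGaussian hδ, integral_tiltedGaussian hδ]
  simp_rw [mul_add]
  rw [integral_add hplus hminus, ← integral_neg_eq_self
    (fun u => tiltDensity Kp δ u * (probMinus K δ u * f (-(K * u)))),
    ← integral_add hplus hminus.comp_neg]
  simp_rw [hbalance]
  rw [integral_const_mul, Measure.integral_comp_mul_left (fun x => tiltDensity Km δ x * f x),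
    abs_inv, abs_of_pos hK0, smul_eq_mul, mul_inv_cancel_left₀ hK0.ne']

theorem exists_coupling {Km Kp : ℝ} (hKm : 0 < Km) (hK : 1 ≤ K) (hKK : K ^ 2 * Km = Kp)
    (hδ : |δ| ≤ 1) :
    ∃ (Ω : Type) (_ : MeasurableSpace Ω) (P : Measure Ω),
      IsProbabilityMeasure P ∧
      ∃ Up Um : Ω → ℝ, Measurable Up ∧ Measurable Um ∧
        P.map Up = tiltedGaussian Kp δ ∧
        P.map Um = tiltedGaussian Km δ ∧
        (∀ᵐ ω ∂P, Um ω = K * Up ω ∨ Um ω = -(K * Up ω)) ∧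
        (∀ᵐ ω ∂P, Km * (Um ω) ^ 2 = Kp * (Up ω) ^ 2) := by
  have hK0 : 0 < K := zero_lt_one.trans_le hK
  have hKp : 0 < Kp := hKK ▸ by positivity
  have := isProbabilityMeasure_tiltedGaussian hKp hδ
  have := isProbabilityMeasure_tiltedGaussian hKm hδ
  have hp01 u : probPlus K δ u ∈ Set.Icc 0 1 :=
    ⟨probPlus_nonneg hK0.le hδ u, probPlus_le_one hK hδ u⟩
  have hsign ω := Coupling.randomChoice_eq_or (p := probPlus K δ) (a := (K * ·))
    (b := fun u => -(K * u)) ω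
  refine ⟨ℝ × ℝ, inferInstance, (tiltedGaussian Kp δ).prod (volume.restrict (Set.Ioc 0 1)),
    inferInstance, Prod.fst, Coupling.randomChoice (probPlus K δ) (K * ·) (fun u => -(K * u)),
    measurable_fst, Coupling.measurable_randomChoice (by fun_prop) (by fun_prop) (by fun_prop),
    ?_, ?_, ae_of_all _ hsign, ae_of_all _ fun ω => ?_⟩
  · rw [Measure.map_fst_prod, measure_univ, one_smul]
  · refine Coupling.map_randomChoice _ (by fun_prop) hp01 (by fun_prop) (by fun_prop) _
      fun g hg hgb => ?_
    have hq u : 1 - probPlus K δ u = probMinus K δ u := by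
      linarith [probPlus_add_probMinus hK0 hδ u]
    simp_rw [hq]
    exact integral_probPlus_add_probMinus hKm hK hKK hδ hg hgb
  · rcases hsign ω with h | h <;> rw [h, ← hKK] <;> ring

end TiltedGaussian

open TiltedGaussian

/-- coupling of the tilted Gaussian laws Ñ(K⁻,δ) and Ñ(K⁺,δ). -/
theorem stmt13 (Km Kp δ : ℝ) (hKm : 0 < Km) (hle : Km ≤ Kp)
    (hδ : δ ∈ Set.Icc (-1 : ℝ) 1) :
    (let K : ℝ := Real.sqrt (Kp / Km)
     let Vp : ℝ → ℝ := fun u => u / Real.sqrt (u ^ 2 + 4)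
     let Vm : ℝ → ℝ := fun u => K * u / Real.sqrt (K ^ 2 * u ^ 2 + 4)
     let r : ℝ → ℝ := fun u => Real.sqrt (K ^ 2 * u ^ 2 + 4) / (K * Real.sqrt (u ^ 2 + 4))
     let pp : ℝ → ℝ := fun u => (1 / 2) * (1 + r u) * (1 + δ * Vm u) / (1 + δ * Vp u)
     let pm : ℝ → ℝ := fun u => (1 / 2) * (1 - r u) * (1 - δ * Vm u) / (1 + δ * Vp u)
     (∀ u : ℝ, 0 ≤ pp u) ∧ (∀ u : ℝ, 0 ≤ pm u) ∧ (∀ u : ℝ, pp u + pm u = 1) ∧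
     (∀ f : ℝ → ℝ, Measurable f → (∃ Cf : ℝ, ∀ x, |f x| ≤ Cf) →
        ∫ u, (pp u * f (K * u) + pm u * f (-(K * u))) ∂(tiltedGaussian Kp δ) =
          ∫ u, f u ∂(tiltedGaussian Km δ)) ∧
     ∃ (Ω : Type) (_ : MeasurableSpace Ω) (P : Measure Ω),
       IsProbabilityMeasure P ∧
       ∃ Up Um : Ω → ℝ, Measurable Up ∧ Measurable Um ∧
         P.map Up = tiltedGaussian Kp δ ∧
         P.map Um = tiltedGaussian Km δ ∧
         (∀ᵐ ω ∂P, Um ω = K * Up ω ∨ Um ω = -(K * Up ω)) ∧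
         (∀ᵐ ω ∂P, Km * (Um ω) ^ 2 = Kp * (Up ω) ^ 2)) := by
  intro K Vp Vm r pp pm
  have hδ' : |δ| ≤ 1 := abs_le.2 hδ
  have hK : 1 ≤ K := Real.one_le_sqrt.2 ((one_le_div hKm).2 hle)
  have hK0 : 0 < K := zero_lt_one.trans_le hK
  have hKK : K ^ 2 * Km = Kp := by
    rw [Real.sq_sqrt (div_nonneg (hKm.le.trans hle) hKm.le), div_mul_cancel₀ _ hKm.ne']
  exact ⟨probPlus_nonneg hK0.le hδ', probMinus_nonneg hK hδ', probPlus_add_probMinus hK0 hδ',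
    fun f hf hfb => integral_probPlus_add_probMinus hKm hK hKK hδ' hf hfb,
    exists_coupling hKm hK hKK hδ'⟩
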